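/- Let p ≥ 3 be an integer, M_p > 0, R > 0, and set θ = p!/(4(p+1)M_p). Let (A_k)_{k≥1} be a sequence of positive reals such that for all N ≥ 1, A_N ≥ (1/4) · θ^{2/(p+1)} / (2R^2)^{(p−1)/(p+1)} · (Σ_{k=1}^N A_k^{(p−1)/(3p+1)})^{(3p+1)/(p+1)}. Then for all k ≥ 1, A_k ≥ k^{(3p+1)/2} / (c M_p R^{p−1}), where c = 2^{(3(p+1)^2+4)/4} (p+1)/p!. -/

import Mathlib

/-!
Write the hypothesis as `A N ≥ C (∑_{k ≤ N} A k ^ β) ^ α` with `α β = (p - 1)/(p + 1) < 1`.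
If `A k ≥ a k ^ e` for all `k`, comparing the sum with `∫₀ᴺ x ^ (e β) dx` gives
`A N ≥ C a ^ (α β) (1 - α β) ^ α N ^ (α β e + α)`; so once `a ^ (1 - α β) ≤ C (1 - α β) ^ α`,
the exponent improves from `e` to `α β e + α`. The case `e = 0` holds because the recursion
alone forces `C ≤ A N ^ (1 - α β)`, and iterating drives the exponent up to the fixed point
`α / (1 - α β) = (3p + 1)/2`. For `a = θ / ((p + 1) ^ ((3p + 1)/2) R ^ (p - 1))` the condition on
`a` is an equality, and this `a` dominates `1 / (c M_p R ^ (p - 1))` because `p + 1 ≤ 2 ^ ((p + 1)/2)`.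
-/

open Finset Real Filter Topology

theorem rpow_add_one_div_le_sum_Icc_rpow {r : ℝ} (hr : 0 ≤ r) (N : ℕ) :
    (N : ℝ) ^ (r + 1) / (r + 1) ≤ ∑ k ∈ Icc 1 N, (k : ℝ) ^ r := by
  have hmono : MonotoneOn (fun x : ℝ => x ^ r) (Set.Icc (0 : ℕ) N) :=
    fun x hx y _ hxy => rpow_le_rpow (by simpa using hx.1) hxy hr
  have h := hmono.integral_le_sum_Ico (Nat.zero_le N)
  rw [Nat.cast_zero, integral_rpow (Or.inl (by linarith)), zero_rpow (by linarith), sub_zero] at h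
  rwa [Finset.sum_Ico_add' (fun k : ℕ => (k : ℝ) ^ r), zero_add, Finset.Ico_add_one_right_eq_Icc] at h

section PowerSumRecursion

def SumRpowRecursion (C α β : ℝ) (A : ℕ → ℝ) : Prop :=
  ∀ N, 1 ≤ N → C * (∑ k ∈ Icc 1 N, A k ^ β) ^ α ≤ A N

variable {α β C a : ℝ} {A : ℕ → ℝ}

theorem le_rpow_one_sub_of_sum_rpow_rec (hα : 0 ≤ α) (hC : 0 ≤ C)
    (hA : ∀ k, 1 ≤ k → 0 < A k)
    (hrec : SumRpowRecursion C α β A) {N : ℕ} (hN : 1 ≤ N) :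
    C ≤ A N ^ (1 - α * β) := by
  have hAN := hA N hN
  have hterm : A N ^ β ≤ ∑ k ∈ Icc 1 N, A k ^ β :=
    single_le_sum (f := fun k => A k ^ β)
      (fun k hk => (rpow_pos_of_pos (hA k (mem_Icc.1 hk).1) _).le) (mem_Icc.2 ⟨hN, le_rfl⟩)
  have hCA : C * A N ^ (α * β) ≤ A N ^ (1 - α * β) * A N ^ (α * β) :=
    calc C * A N ^ (α * β) = C * (A N ^ β) ^ α := by rw [mul_comm α, rpow_mul hAN.le]
      _ ≤ C * (∑ k ∈ Icc 1 N, A k ^ β) ^ α := by gcongr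
      _ ≤ A N := hrec N hN
      _ = A N ^ (1 - α * β) * A N ^ (α * β) := by rw [← rpow_add hAN, sub_add_cancel, rpow_one]
  exact le_of_mul_le_mul_right hCA (rpow_pos_of_pos hAN _)

theorem mul_rpow_le_of_sum_rpow_rec_step (hα : 0 ≤ α) (hβ : 0 ≤ β) (hαβ : α * β < 1)
    (hrec : SumRpowRecursion C α β A)
    (ha : 0 < a) (haC : a ^ (1 - α * β) ≤ C * (1 - α * β) ^ α)
    {e : ℝ} (he : 0 ≤ e) (hes : e ≤ α / (1 - α * β))
    (hprev : ∀ k : ℕ, 1 ≤ k → a * (k : ℝ) ^ e ≤ A k) {N : ℕ} (hN : 1 ≤ N) :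
    a * (N : ℝ) ^ (α * β * e + α) ≤ A N := by
  have hδ : 0 < 1 - α * β := by linarith
  have hNpos : (0 : ℝ) < N := by exact_mod_cast hN
  have heβ : 0 ≤ e * β := mul_nonneg he hβ
  have hδe : 1 - α * β ≤ 1 / (e * β + 1) := by
    rw [le_div_iff₀ (by positivity)]
    rw [le_div_iff₀ hδ] at hes
    nlinarith
  have hsum : a ^ β * ((1 - α * β) * (N : ℝ) ^ (e * β + 1)) ≤ ∑ k ∈ Icc 1 N, A k ^ β :=
    calc a ^ β * ((1 - α * β) * (N : ℝ) ^ (e * β + 1))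
        ≤ a ^ β * ((N : ℝ) ^ (e * β + 1) / (e * β + 1)) := by
          rw [div_eq_mul_one_div, mul_comm _ (1 / _)]; gcongr
      _ ≤ a ^ β * ∑ k ∈ Icc 1 N, (k : ℝ) ^ (e * β) := by
          gcongr; exact rpow_add_one_div_le_sum_Icc_rpow heβ N
      _ = ∑ k ∈ Icc 1 N, (a * (k : ℝ) ^ e) ^ β := by
          rw [mul_sum]
          refine sum_congr rfl fun k _ => ?_
          rw [mul_rpow ha.le (by positivity), ← rpow_mul (Nat.cast_nonneg k)]
      _ ≤ ∑ k ∈ Icc 1 N, A k ^ β :=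
          sum_le_sum fun k hk => rpow_le_rpow (by positivity) (hprev k (mem_Icc.1 hk).1) hβ
  have hfix : a ≤ C * a ^ (α * β) * (1 - α * β) ^ α :=
    calc a = a ^ (1 - α * β) * a ^ (α * β) := by rw [← rpow_add ha, sub_add_cancel, rpow_one]
      _ ≤ C * (1 - α * β) ^ α * a ^ (α * β) := by gcongr
      _ = C * a ^ (α * β) * (1 - α * β) ^ α := by ring
  have hC : 0 ≤ C :=
    (pos_of_mul_pos_left ((rpow_pos_of_pos ha _).trans_le haC) (rpow_nonneg hδ.le _)).le
  calc a * (N : ℝ) ^ (α * β * e + α)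
      ≤ C * a ^ (α * β) * (1 - α * β) ^ α * (N : ℝ) ^ (α * β * e + α) := by gcongr
    _ = C * (a ^ β * ((1 - α * β) * (N : ℝ) ^ (e * β + 1))) ^ α := by
        rw [mul_rpow (by positivity) (by positivity), mul_rpow hδ.le (by positivity),
          ← rpow_mul ha.le, ← rpow_mul hNpos.le]
        ring_nf
    _ ≤ C * (∑ k ∈ Icc 1 N, A k ^ β) ^ α := by gcongr
    _ ≤ A N := hrec N hN

theorem mul_rpow_iterate_le_of_sum_rpow_rec (hα : 0 ≤ α) (hβ : 0 ≤ β) (hαβ : α * β < 1)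
    (hA : ∀ k, 1 ≤ k → 0 < A k)
    (hrec : SumRpowRecursion C α β A)
    (ha : 0 < a) (haC : a ^ (1 - α * β) ≤ C * (1 - α * β) ^ α) (i : ℕ) {N : ℕ} (hN : 1 ≤ N) :
    a * (N : ℝ) ^ (α / (1 - α * β) * (1 - (α * β) ^ i)) ≤ A N := by
  have hδ : 0 < 1 - α * β := by linarith
  have hαβ₀ : 0 ≤ α * β := mul_nonneg hα hβ
  induction i generalizing N with
  | zero =>
    have hC : 0 ≤ C :=
      (pos_of_mul_pos_left ((rpow_pos_of_pos ha _).trans_le haC) (rpow_nonneg hδ.le _)).le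
    have haC' : a ^ (1 - α * β) ≤ C :=
      haC.trans (mul_le_of_le_one_right hC (rpow_le_one hδ.le (by linarith) hα))
    have := le_rpow_one_sub_of_sum_rpow_rec hα hC hA hrec hN
    simpa using (rpow_le_rpow_iff ha.le (hA N hN).le hδ).1 (haC'.trans this)
  | succ i ih =>
    have hγi : (α * β) ^ i ≤ 1 := pow_le_one₀ hαβ₀ hαβ.le
    have hs : 0 ≤ α / (1 - α * β) := div_nonneg hα hδ.le
    convert mul_rpow_le_of_sum_rpow_rec_step hα hβ hαβ hrec ha haC
      (mul_nonneg hs (by linarith)) (mul_le_of_le_one_right hs (by linarith [pow_nonneg hαβ₀ i]))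
      (fun k hk => ih hk) hN using 3
    field_simp
    ring

theorem mul_rpow_le_of_sum_rpow_rec (hα : 0 ≤ α) (hβ : 0 ≤ β) (hαβ : α * β < 1)
    (hA : ∀ k, 1 ≤ k → 0 < A k)
    (hrec : SumRpowRecursion C α β A)
    (ha : 0 < a) (haC : a ^ (1 - α * β) ≤ C * (1 - α * β) ^ α) {N : ℕ} (hN : 1 ≤ N) :
    a * (N : ℝ) ^ (α / (1 - α * β)) ≤ A N := by
  have hexp : Tendsto (fun i : ℕ => α / (1 - α * β) * (1 - (α * β) ^ i)) atTop
      (𝓝 (α / (1 - α * β))) := by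
    simpa using ((tendsto_pow_atTop_nhds_zero_of_lt_one (mul_nonneg hα hβ) hαβ).const_sub 1).const_mul
      (α / (1 - α * β))
  have hNpos : (0 : ℝ) < N := by exact_mod_cast hN
  exact le_of_tendsto' (((continuousAt_const_rpow hNpos.ne').tendsto.comp hexp).const_mul a)
    fun i => mul_rpow_iterate_le_of_sum_rpow_rec hα hβ hαβ hA hrec ha haC i hN

end PowerSumRecursion

theorem sq_le_two_pow_of_four_le {n : ℕ} (hn : 4 ≤ n) : n ^ 2 ≤ 2 ^ n := by
  induction n, hn using Nat.le_induction with
  | base => norm_num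
  | succ m hm ih =>
    calc (m + 1) ^ 2 ≤ 2 * m ^ 2 := by nlinarith
      _ ≤ 2 ^ (m + 1) := by rw [pow_succ 2 m]; linarith

theorem natCast_le_two_rpow_half {n : ℕ} (hn : 4 ≤ n) : (n : ℝ) ≤ 2 ^ ((n : ℝ) / 2) := by
  refine le_of_pow_le_pow_left₀ two_ne_zero (rpow_nonneg zero_le_two _) ?_
  rw [← rpow_natCast (2 ^ _), ← rpow_mul zero_le_two, Nat.cast_two, div_mul_cancel₀ _ two_ne_zero,
    rpow_natCast]
  exact_mod_cast sq_le_two_pow_of_four_le hn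

theorem four_mul_rpow_le_two_rpow {p : ℕ} (hp : 3 ≤ p) :
    4 * ((p : ℝ) + 1) ^ ((3 * (p : ℝ) + 1) / 2) ≤ 2 ^ ((3 * ((p : ℝ) + 1) ^ 2 + 4) / 4) := by
  have hp' : (3 : ℝ) ≤ p := by exact_mod_cast hp
  have hsucc : (p : ℝ) + 1 ≤ 2 ^ (((p : ℝ) + 1) / 2) := by
    exact_mod_cast natCast_le_two_rpow_half (n := p + 1) (by omega)
  calc 4 * ((p : ℝ) + 1) ^ ((3 * (p : ℝ) + 1) / 2)
      ≤ 2 ^ (2 : ℝ) * (2 ^ (((p : ℝ) + 1) / 2)) ^ ((3 * (p : ℝ) + 1) / 2) := by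
        rw [rpow_two]; norm_num; gcongr
    _ = 2 ^ (2 + ((p : ℝ) + 1) / 2 * ((3 * (p : ℝ) + 1) / 2)) := by
        rw [← rpow_mul zero_le_two, rpow_add two_pos]
    _ ≤ 2 ^ ((3 * ((p : ℝ) + 1) ^ 2 + 4) / 4) := by
        gcongr
        · norm_num
        · nlinarith

noncomputable def recursionConstant (p : ℕ) (θ R : ℝ) : ℝ :=
  1 / 4 * θ ^ ((2 : ℝ) / ((p : ℝ) + 1)) / (2 * R ^ 2) ^ (((p : ℝ) - 1) / ((p : ℝ) + 1))

noncomputable def growthConstant (p : ℕ) (θ R : ℝ) : ℝ :=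
  θ / (((p : ℝ) + 1) ^ ((3 * (p : ℝ) + 1) / 2) * R ^ (p - 1))

theorem growthConstant_rpow {p : ℕ} (hp : 1 ≤ p) {θ R : ℝ} (hθ : 0 ≤ θ) (hR : 0 < R) :
    growthConstant p θ R ^ ((2 : ℝ) / ((p : ℝ) + 1)) =
      recursionConstant p θ R * (2 / ((p : ℝ) + 1)) ^ ((3 * (p : ℝ) + 1) / ((p : ℝ) + 1)) := by
  have hP : (0 : ℝ) < (p : ℝ) + 1 := by positivity
  have hR' : R ^ (p - 1) = (R ^ 2) ^ (((p : ℝ) - 1) / 2) := by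
    rw [← rpow_natCast R 2, ← rpow_mul hR.le, Nat.cast_two, mul_div_cancel₀ _ two_ne_zero,
      ← rpow_natCast, Nat.cast_sub hp, Nat.cast_one]
  have h2 : (2 : ℝ) ^ ((3 * (p : ℝ) + 1) / ((p : ℝ) + 1)) =
      4 * 2 ^ (((p : ℝ) - 1) / ((p : ℝ) + 1)) := by
    rw [show (3 * (p : ℝ) + 1) / ((p : ℝ) + 1) = 2 + ((p : ℝ) - 1) / ((p : ℝ) + 1) by
      field_simp; ring, rpow_add two_pos, rpow_two]
    norm_num
  unfold growthConstant recursionConstant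
  rw [hR', div_rpow hθ (by positivity), mul_rpow (by positivity) (by positivity),
    ← rpow_mul hP.le, ← rpow_mul (by positivity), mul_rpow zero_le_two (by positivity),
    div_rpow zero_le_two hP.le, h2,
    show (3 * (p : ℝ) + 1) / 2 * (2 / ((p : ℝ) + 1)) = (3 * (p : ℝ) + 1) / ((p : ℝ) + 1) by
      field_simp,
    show ((p : ℝ) - 1) / 2 * (2 / ((p : ℝ) + 1)) = ((p : ℝ) - 1) / ((p : ℝ) + 1) by
      field_simp]
  field_simp

theorem lemma_c_estimate (p : ℕ) (hp : 3 ≤ p) (Mp R : ℝ) (hMp : 0 < Mp) (hR : 0 < R)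
    (A : ℕ → ℝ) (hApos : ∀ k : ℕ, 1 ≤ k → 0 < A k)
    (hrec : ∀ N : ℕ, 1 ≤ N →
      A N ≥ (1 / 4) * ((Nat.factorial p : ℝ) / (4 * ((p : ℝ) + 1) * Mp)) ^ ((2 : ℝ) / ((p : ℝ) + 1))
          / (2 * R ^ 2) ^ (((p : ℝ) - 1) / ((p : ℝ) + 1))
          * (∑ k ∈ Finset.Icc 1 N, A k ^ (((p : ℝ) - 1) / (3 * (p : ℝ) + 1)))
              ^ ((3 * (p : ℝ) + 1) / ((p : ℝ) + 1))) :
    ∀ k : ℕ, 1 ≤ k →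
      A k ≥ (k : ℝ) ^ ((3 * (p : ℝ) + 1) / 2)
        / ((2 ^ ((3 * ((p : ℝ) + 1) ^ 2 + 4) / 4) * ((p : ℝ) + 1) / (Nat.factorial p : ℝ))
            * Mp * R ^ (p - 1)) := by
  intro k hk
  have hp' : (3 : ℝ) ≤ p := by exact_mod_cast hp
  set θ := (Nat.factorial p : ℝ) / (4 * ((p : ℝ) + 1) * Mp) with hθ
  have hδ : 1 - (3 * (p : ℝ) + 1) / ((p : ℝ) + 1) * (((p : ℝ) - 1) / (3 * (p : ℝ) + 1)) =
      2 / ((p : ℝ) + 1) := by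
    field_simp; ring
  have hs : (3 * (p : ℝ) + 1) / ((p : ℝ) + 1) / (2 / ((p : ℝ) + 1)) = (3 * (p : ℝ) + 1) / 2 := by
    field_simp
  have key := mul_rpow_le_of_sum_rpow_rec (C := recursionConstant p θ R)
    (a := growthConstant p θ R) (by positivity) (by bound)
    (by rw [← sub_pos, hδ]; positivity) hApos hrec (by unfold growthConstant; positivity)
    (by rw [hδ, growthConstant_rpow (by omega) (by positivity) hR]) hk
  rw [hδ, hs] at key
  refine le_trans ?_ key
  unfold growthConstant
  rw [hθ]
  field_simp
  exact four_mul_rpow_le_two_rpow hp
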